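/- Let A ∈ ℝ^{n×n} be symmetric and invertible, W ∈ ℝ^{n×n} symmetric positive definite, S ∈ ℝ^{n×q} of full column rank, and X_k ∈ ℝ^{n×n} symmetric. Set Λ := (S^T A W A S)^{-1} and X_{k+1} := X_k − (X_k A − I) S Λ S^T A W + W A S Λ S^T (A X_k − I)(A S Λ S^T A W − I). Then X_{k+1} is a minimizer of ‖X − A^{-1}‖_{F(W^{-1})} over the affine set {X_k + (1/2)(Y S^T A W + W A^T S Y^T) : Y ∈ ℝ^{n×q}}; i.e., for every Y ∈ ℝ^{n×q} one has ‖X_{k+1} − A^{-1}‖_{F(W^{-1})} ≤ ‖X_k + (1/2)(Y S^T A W + W A^T S Y^T) − A^{-1}‖_{F(W^{-1})}. -/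

import Mathlib

/-!
Put `K = A S` and `Λ = (Kᵀ W K)⁻¹`; full column rank of `S` makes `Kᵀ W K` positive definite.
The error of the update factors as `(1 - W K Λ Kᵀ) (X_k - A⁻¹) (1 - K Λ Kᵀ W)`, so it is killed
by `Kᵀ` on the left and by `K` on the right. Such a matrix is orthogonal, for the inner product
`⟨X, Y⟩ = Tr(Xᵀ W⁻¹ Y W⁻¹)`, to every `W K Z + Z' Kᵀ W`, and each candidate error differs from
the update's error by a matrix of this form; Pythagoras gives the inequality.
-/

open Matrix BigOperators

/-- Squared weighted Frobenius norm: `‖X‖_{F(W⁻¹)}² = Tr(Xᵀ W⁻¹ X W⁻¹)`. -/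
noncomputable def wFNormSq {n : ℕ} (W X : Matrix (Fin n) (Fin n) ℝ) : ℝ :=
  (Xᵀ * W⁻¹ * X * W⁻¹).trace

/-- Weighted Frobenius norm `‖X‖_{F(W⁻¹)}`. -/
noncomputable def wFNorm {n : ℕ} (W X : Matrix (Fin n) (Fin n) ℝ) : ℝ :=
  Real.sqrt (wFNormSq W X)

open scoped ComplexOrder MatrixOrder in
theorem Matrix.PosSemidef.trace_mul_nonneg {𝕜 n : Type*} [RCLike 𝕜] [Fintype n]
    {P Q : Matrix n n 𝕜} (hP : P.PosSemidef) (hQ : Q.PosSemidef) : 0 ≤ (P * Q).trace := by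
  classical
  obtain ⟨B, rfl⟩ := CStarAlgebra.nonneg_iff_eq_star_mul_self.mp hQ.nonneg
  rw [star_eq_conjTranspose, ← Matrix.mul_assoc, trace_mul_comm]
  simpa [Matrix.mul_assoc] using (hP.mul_mul_conjTranspose_same B).trace_nonneg

theorem Matrix.mulVec_injective_of_rank_eq_card {R m k : Type*} [Field R] [Fintype m] [Fintype k]
    (S : Matrix m k R) (hS : S.rank = Fintype.card k) : Function.Injective S.mulVec := by
  have h := LinearMap.finrank_range_add_finrank_ker S.mulVecLin
  rw [← Matrix.rank, hS, Module.finrank_fintype_fun_eq_card, add_eq_left,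
    Submodule.finrank_eq_zero] at h
  exact LinearMap.ker_eq_bot.mp h

noncomputable def wInner {n : ℕ} (W X Y : Matrix (Fin n) (Fin n) ℝ) : ℝ :=
  (Xᵀ * W⁻¹ * Y * W⁻¹).trace

section WeightedFrobenius

variable {n : ℕ} {W : Matrix (Fin n) (Fin n) ℝ}

theorem wFNormSq_nonneg (hW : W.PosDef) (X : Matrix (Fin n) (Fin n) ℝ) : 0 ≤ wFNormSq W X := by
  have hWinv := hW.inv.posSemidef
  have h := (hWinv.conjTranspose_mul_mul_same X).trace_mul_nonneg hWinv
  rwa [conjTranspose_eq_transpose_of_trivial] at h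

theorem wInner_comm (hW : Wᵀ = W) (X Y : Matrix (Fin n) (Fin n) ℝ) :
    wInner W X Y = wInner W Y X := by
  have hWinv : (W⁻¹)ᵀ = W⁻¹ := by rw [transpose_nonsing_inv, hW]
  rw [wInner, ← trace_transpose]
  simp only [transpose_mul, transpose_transpose, hWinv]
  rw [wInner, trace_mul_comm]
  simp only [Matrix.mul_assoc]

theorem wFNormSq_add (hW : Wᵀ = W) (X Y : Matrix (Fin n) (Fin n) ℝ) :
    wFNormSq W (X + Y) = wFNormSq W X + 2 * wInner W X Y + wFNormSq W Y := by
  have h := wInner_comm hW Y X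
  simp only [wFNormSq, wInner] at h ⊢
  simp only [transpose_add, Matrix.add_mul, Matrix.mul_add, trace_add, h]
  ring

theorem wFNorm_le_wFNorm_add (hW : W.PosDef) {X Y : Matrix (Fin n) (Fin n) ℝ}
    (hXY : wInner W X Y = 0) : wFNorm W X ≤ wFNorm W (X + Y) := by
  refine Real.sqrt_le_sqrt ?_
  rw [wFNormSq_add (by simpa using hW.isHermitian.eq), hXY]
  linarith [wFNormSq_nonneg hW Y]

end WeightedFrobenius

noncomputable def projectedError {n : ℕ} {m : Type*} [Fintype m] [DecidableEq m]
    (W : Matrix (Fin n) (Fin n) ℝ) (K : Matrix (Fin n) m ℝ) (E : Matrix (Fin n) (Fin n) ℝ) :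
    Matrix (Fin n) (Fin n) ℝ :=
  (1 - W * K * (Kᵀ * W * K)⁻¹ * Kᵀ) * E * (1 - K * (Kᵀ * W * K)⁻¹ * Kᵀ * W)

section Projection

variable {n : ℕ} {m : Type*} [Fintype m]
  {W : Matrix (Fin n) (Fin n) ℝ} {K : Matrix (Fin n) m ℝ}

theorem isUnit_det_transpose_mul_mul [DecidableEq m] (hW : W.PosDef)
    (hK : Function.Injective K.mulVec) : IsUnit (Kᵀ * W * K).det := by
  have h := hW.conjTranspose_mul_mul_same hK
  rw [conjTranspose_eq_transpose_of_trivial] at h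
  exact h.det_pos.ne'.isUnit

theorem wInner_mul_add_mul_eq_zero (hW : IsUnit W.det) {E : Matrix (Fin n) (Fin n) ℝ}
    (hKE : Kᵀ * E = 0) (hEK : E * K = 0) (Z : Matrix m (Fin n) ℝ) (Z' : Matrix (Fin n) m ℝ) :
    wInner W E (W * K * Z + Z' * Kᵀ * W) = 0 := by
  have hEtK : Eᵀ * K = 0 := by rw [← transpose_transpose K, ← transpose_mul, hKE, transpose_zero]
  have hKtEt : Kᵀ * Eᵀ = 0 := by rw [← transpose_mul, hEK, transpose_zero]
  have h₁ : (Eᵀ * W⁻¹ * (W * K * Z) * W⁻¹).trace = 0 := by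
    rw [show Eᵀ * W⁻¹ * (W * K * Z) * W⁻¹ = Eᵀ * (W⁻¹ * W) * K * Z * W⁻¹ by
      simp only [Matrix.mul_assoc], nonsing_inv_mul W hW, Matrix.mul_one, hEtK]
    simp
  have h₂ : (Eᵀ * W⁻¹ * (Z' * Kᵀ * W) * W⁻¹).trace = 0 := by
    rw [show Eᵀ * W⁻¹ * (Z' * Kᵀ * W) * W⁻¹ = Eᵀ * W⁻¹ * Z' * Kᵀ * (W * W⁻¹) by
      simp only [Matrix.mul_assoc], mul_nonsing_inv W hW, Matrix.mul_one, trace_mul_comm,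
      ← Matrix.mul_assoc, ← Matrix.mul_assoc, hKtEt]
    simp
  rw [wInner, Matrix.mul_add, Matrix.add_mul, trace_add, h₁, h₂, add_zero]

theorem transpose_mul_projectedError [DecidableEq m] (hM : IsUnit (Kᵀ * W * K).det)
    (E : Matrix (Fin n) (Fin n) ℝ) : Kᵀ * projectedError W K E = 0 := by
  have h : Kᵀ * (1 - W * K * (Kᵀ * W * K)⁻¹ * Kᵀ) = 0 := by
    rw [Matrix.mul_sub, Matrix.mul_one,
      show Kᵀ * (W * K * (Kᵀ * W * K)⁻¹ * Kᵀ) = (Kᵀ * W * K) * (Kᵀ * W * K)⁻¹ * Kᵀ by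
        simp only [Matrix.mul_assoc], mul_nonsing_inv _ hM, Matrix.one_mul, sub_self]
  rw [projectedError, ← Matrix.mul_assoc, ← Matrix.mul_assoc, h, Matrix.zero_mul, Matrix.zero_mul]

theorem projectedError_mul [DecidableEq m] (hM : IsUnit (Kᵀ * W * K).det)
    (E : Matrix (Fin n) (Fin n) ℝ) : projectedError W K E * K = 0 := by
  have h : (1 - K * (Kᵀ * W * K)⁻¹ * Kᵀ * W) * K = 0 := by
    rw [Matrix.sub_mul, Matrix.one_mul,
      show K * (Kᵀ * W * K)⁻¹ * Kᵀ * W * K = K * ((Kᵀ * W * K)⁻¹ * (Kᵀ * W * K)) by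
        simp only [Matrix.mul_assoc], nonsing_inv_mul _ hM, Matrix.mul_one, sub_self]
  rw [projectedError, Matrix.mul_assoc, h, Matrix.mul_zero]

theorem wFNorm_projectedError_le [DecidableEq m] (hW : W.PosDef) (hM : IsUnit (Kᵀ * W * K).det)
    (E : Matrix (Fin n) (Fin n) ℝ) (Z : Matrix m (Fin n) ℝ) (Z' : Matrix (Fin n) m ℝ) :
    wFNorm W (projectedError W K E) ≤ wFNorm W (E + (W * K * Z + Z' * Kᵀ * W)) := by
  unfold projectedError
  set Λ := (Kᵀ * W * K)⁻¹
  have hE : E + (W * K * Z + Z' * Kᵀ * W) =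
      (1 - W * K * Λ * Kᵀ) * E * (1 - K * Λ * Kᵀ * W) +
        (W * K * (Λ * Kᵀ * E + Z) + (E * K * Λ - W * K * Λ * Kᵀ * E * K * Λ + Z') * Kᵀ * W) := by
    simp only [Matrix.mul_add, Matrix.add_mul, Matrix.mul_sub, Matrix.sub_mul, Matrix.mul_one,
      Matrix.one_mul, Matrix.mul_assoc]
    abel
  rw [hE]
  exact wFNorm_le_wFNorm_add hW <| wInner_mul_add_mul_eq_zero hW.det_pos.ne'.isUnit
    (transpose_mul_projectedError hM E) (projectedError_mul hM E) _ _

end Projection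

theorem stmt4_general {n q : ℕ} (A W : Matrix (Fin n) (Fin n) ℝ)
    (S : Matrix (Fin n) (Fin q) ℝ) (Xk : Matrix (Fin n) (Fin n) ℝ)
    (hA : IsUnit A.det) (hAsym : Aᵀ = A) (hW : W.PosDef) (hS : S.rank = q) :
    let Λ := (Sᵀ * A * W * A * S)⁻¹
    let Xnext := Xk - (Xk * A - 1) * S * Λ * Sᵀ * A * W +
      W * A * S * Λ * Sᵀ * (A * Xk - 1) * (A * S * Λ * Sᵀ * A * W - 1)
    ∀ Y : Matrix (Fin n) (Fin q) ℝ,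
      wFNorm W (Xnext - A⁻¹) ≤
        wFNorm W ((Xk + (1 / 2 : ℝ) • (Y * Sᵀ * A * W + W * Aᵀ * S * Yᵀ)) - A⁻¹) := by
  intro Λ Xnext Y
  set K := A * S
  have hKt : Kᵀ = Sᵀ * A := by rw [transpose_mul, hAsym]
  have hΛ : Λ = (Kᵀ * W * K)⁻¹ := by rw [hKt]; simp only [Λ, K, Matrix.mul_assoc]
  have hK : Function.Injective K.mulVec := by
    have hcomp : K.mulVec = A.mulVec ∘ S.mulVec := funext fun x => (mulVec_mulVec x A S).symm
    rw [hcomp]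
    exact (mulVec_injective_of_isUnit ((isUnit_iff_isUnit_det A).mpr hA)).comp
      (S.mulVec_injective_of_rank_eq_card (by rw [hS, Fintype.card_fin]))
  have hnext : Xnext - A⁻¹ = projectedError W K (Xk - A⁻¹) := by
    have hXA : Xk * A - 1 = (Xk - A⁻¹) * A := by rw [Matrix.sub_mul, nonsing_inv_mul A hA]
    have hAX : A * Xk - 1 = A * (Xk - A⁻¹) := by rw [Matrix.mul_sub, mul_nonsing_inv A hA]
    rw [projectedError, ← hΛ]
    simp only [Xnext, hXA, hAX, hKt, K]
    simp only [Matrix.mul_sub, Matrix.sub_mul, Matrix.mul_one, Matrix.one_mul, Matrix.mul_assoc]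
    abel
  have hcand : Xk + (1 / 2 : ℝ) • (Y * Sᵀ * A * W + W * Aᵀ * S * Yᵀ) - A⁻¹ =
      (Xk - A⁻¹) + (W * K * ((1 / 2 : ℝ) • Yᵀ) + ((1 / 2 : ℝ) • Y) * Kᵀ * W) := by
    simp only [hKt, K, hAsym, smul_add, Matrix.mul_smul, Matrix.smul_mul, Matrix.mul_assoc]
    abel
  rw [hnext, hcand]
  exact wFNorm_projectedError_le hW (isUnit_det_transpose_mul_mul hW hK) _ _ _

theorem stmt4 {n q : ℕ} (A W : Matrix (Fin n) (Fin n) ℝ)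
    (S : Matrix (Fin n) (Fin q) ℝ) (Xk : Matrix (Fin n) (Fin n) ℝ)
    (hA : IsUnit A.det) (hAsym : Aᵀ = A) (hW : W.PosDef) (hS : S.rank = q)
    (hXk : Xkᵀ = Xk) :
    let Λ := (Sᵀ * A * W * A * S)⁻¹
    let Xnext := Xk - (Xk * A - 1) * S * Λ * Sᵀ * A * W +
      W * A * S * Λ * Sᵀ * (A * Xk - 1) * (A * S * Λ * Sᵀ * A * W - 1)
    ∀ Y : Matrix (Fin n) (Fin q) ℝ,
      wFNorm W (Xnext - A⁻¹) ≤
        wFNorm W ((Xk + (1 / 2 : ℝ) • (Y * Sᵀ * A * W + W * Aᵀ * S * Yᵀ)) - A⁻¹) :=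
  stmt4_general A W S Xk hA hAsym hW hS
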